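/- arXiv:2205.09516 — 3 statements merged into one kernel-verified Lean document; each statement's English description precedes it below -/
import Mathlib

section
/- Let H ∈ (1/2, 1) and β ∈ ℝ. Then for all s,t ≥ 0 the fOU covariance kernel K(s,t) = ∫₀ᵗ e^{β(t−v)} · (d/dv)( ∫₀ˢ H·|v−u|^{2H−1}·sign(v−u)·e^{β(s−u)} du ) dv admits the representation K(s,t) = H(2H−1) · ∫₀ᵗ ∫₀ˢ e^{β(t−v)} e^{β(s−u)} |u−v|^{2H−2} du dv; equivalently, with α := 2−2H ∈ (0,1) and c_α := (1−α/2)(1−α), K(s,t) = c_α ∫₀ᵗ ∫₀ˢ e^{β(t−v)} e^{β(s−u)} |u−v|^{−α} du dv. -/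
open Real Set

/-- The fractional Ornstein–Uhlenbeck covariance kernel. -/
noncomputable def fOUkernel (H β : ℝ) (s t : ℝ) : ℝ :=
  ∫ v in (0:ℝ)..t, Real.exp (β * (t - v)) *
    deriv (fun w : ℝ =>
      ∫ u in (0:ℝ)..s, H * |w - u| ^ (2 * H - 1) * Real.sign (w - u) * Real.exp (β * (s - u))) v

/-! For `H > 1/2` the function `g x = H |x|^(2H-1) sign x` is continuous, and off `0` it has the
locally integrable derivative `H(2H-1) |x|^(2H-2)`. The substitution `x = w - u` turns the inner
integral into `e^{β(s-w)} ∫_{w-s}^{w} g x e^{βx} dx`, so that `w` enters only through a scalar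
factor and the limits, and the fundamental theorem of calculus differentiates it. Integrating by
parts, which only needs differentiability of `g` off a countable set, turns the resulting boundary
terms back into `∫_{w-s}^{w} g' x e^{βx} dx`, and undoing the substitution gives the double
integral. -/

open intervalIntegral
open MeasureTheory (volume integral_eq_of_hasDerivAt_off_countable)

lemma hasDerivAt_abs_rpow_mul_sign (ν : ℝ) {x : ℝ} (hx : x ≠ 0) :
    HasDerivAt (fun y : ℝ => |y| ^ ν * Real.sign y) (ν * |x| ^ (ν - 1)) x := by
  rcases hx.lt_or_gt with hx | hx
  · have hd := ((hasDerivAt_rpow_const (p := ν) (Or.inl (neg_ne_zero.2 hx.ne))).comp x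
      (hasDerivAt_neg x)).neg
    refine (hd.congr_deriv (by rw [abs_of_neg hx]; ring)).congr_of_eventuallyEq ?_
    filter_upwards [Iio_mem_nhds hx] with y hy
    simp [abs_of_neg (mem_Iio.1 hy), Real.sign_of_neg (mem_Iio.1 hy)]
  · have hd := hasDerivAt_rpow_const (p := ν) (Or.inl hx.ne')
    refine (hd.congr_deriv (by rw [abs_of_pos hx])).congr_of_eventuallyEq ?_
    filter_upwards [Ioi_mem_nhds hx] with y hy
    simp [abs_of_pos (mem_Ioi.1 hy), Real.sign_of_pos (mem_Ioi.1 hy)]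

lemma continuous_abs_rpow_mul_sign {ν : ℝ} (hν : 0 < ν) :
    Continuous fun y : ℝ => |y| ^ ν * Real.sign y := by
  refine continuous_iff_continuousAt.2 fun x => ?_
  rcases eq_or_ne x 0 with rfl | hx
  · have hpow : Filter.Tendsto (fun y : ℝ => |y| ^ ν) (nhds 0) (nhds 0) :=
      (continuous_abs.rpow_const fun _ => Or.inr hν.le).tendsto' 0 0 (by simp [hν.ne'])
    show Filter.Tendsto _ _ (nhds (|0| ^ ν * Real.sign 0))
    rw [Real.sign_zero, mul_zero]
    refine squeeze_zero_norm (fun y => ?_) hpow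
    rw [norm_mul, Real.norm_eq_abs, abs_of_nonneg (by positivity)]
    refine mul_le_of_le_one_right (by positivity) ?_
    rcases Real.sign_apply_eq y with h | h | h <;> simp [h]
  · exact (hasDerivAt_abs_rpow_mul_sign ν hx).continuousAt

lemma intervalIntegrable_abs_rpow {r : ℝ} (hr : -1 < r) (a b : ℝ) :
    IntervalIntegrable (fun x : ℝ => |x| ^ r) volume a b :=
  intervalIntegrable_of_even (fun x => by rw [abs_neg]) fun c hc =>
    (intervalIntegrable_rpow' hr).congr fun x hx => by
      rw [uIoc_of_le hc.le] at hx
      simp only [abs_of_pos hx.1]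

lemma hasDerivAt_integral_sub_const_to_self {h : ℝ → ℝ} (hh : Continuous h) (s w : ℝ) :
    HasDerivAt (fun w => ∫ x in (w - s)..w, h x) (h w - h (w - s)) w := by
  have hΨ : ∀ y, HasDerivAt (fun y => ∫ x in (0:ℝ)..y, h x) (h y) y := fun y =>
    (hh.integral_hasStrictDerivAt 0 y).hasDerivAt
  have hsplit : (fun w => ∫ x in (w - s)..w, h x) =
      fun w => (∫ x in (0:ℝ)..w, h x) - ∫ x in (0:ℝ)..(w - s), h x := by
    funext w
    exact (integral_interval_sub_left (hh.intervalIntegrable _ _) (hh.intervalIntegrable _ _)).symm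
  rw [hsplit]
  exact (hΨ w).sub ((hΨ (w - s)).comp_sub_const w s)

section ExpWeighted

variable (β : ℝ)

lemma integral_comp_sub_mul_exp (f : ℝ → ℝ) (s w : ℝ) :
    ∫ u in (0:ℝ)..s, f (w - u) * exp (β * (s - u)) =
      exp (β * (s - w)) * ∫ x in (w - s)..w, f x * exp (β * x) := by
  have hsub := integral_comp_sub_left (a := 0) (b := s)
    (fun x => exp (β * (s - w)) * (f x * exp (β * x))) w
  rw [sub_zero] at hsub
  rw [← integral_const_mul, ← hsub]
  refine integral_congr fun u _ => ?_
  rw [mul_left_comm, ← exp_add]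
  ring_nf

variable {g g' : ℝ → ℝ} {C : Set ℝ}

lemma integral_deriv_mul_exp_eq (hg : Continuous g) (hC : C.Countable)
    (hd : ∀ x ∉ C, HasDerivAt g (g' x) x) (hi : ∀ a b, IntervalIntegrable g' volume a b)
    (a b : ℝ) :
    ∫ x in a..b, g' x * exp (β * x) =
      g b * exp (β * b) - g a * exp (β * a) - β * ∫ x in a..b, g x * exp (β * x) := by
  have hexp : Continuous fun x => exp (β * x) := by fun_prop
  have hi₁ : IntervalIntegrable (fun x => g' x * exp (β * x)) volume a b :=
    (hi a b).mul_continuousOn hexp.continuousOn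
  have hi₂ : IntervalIntegrable (fun x => β * (g x * exp (β * x))) volume a b :=
    ((hg.mul hexp).const_mul β).intervalIntegrable a b
  have hftc := integral_eq_of_hasDerivAt_off_countable (fun x => g x * exp (β * x)) _ hC
    (hg.mul hexp).continuousOn
    (fun x hx => ((hd x hx.2).mul ((hasDerivAt_id x).const_mul β).exp).congr_deriv
      (by simp only [id]; ring))
    (hi₁.add hi₂)
  rw [integral_add hi₁ hi₂, integral_const_mul] at hftc
  linarith

theorem hasDerivAt_integral_comp_sub_mul_exp (hg : Continuous g) (hC : C.Countable)
    (hd : ∀ x ∉ C, HasDerivAt g (g' x) x) (hi : ∀ a b, IntervalIntegrable g' volume a b)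
    (s v : ℝ) :
    HasDerivAt (fun w => ∫ u in (0:ℝ)..s, g (w - u) * exp (β * (s - u)))
      (∫ u in (0:ℝ)..s, g' (v - u) * exp (β * (s - u))) v := by
  have hh : Continuous fun x => g x * exp (β * x) := hg.mul (by fun_prop)
  have hexp : HasDerivAt (fun w => exp (β * (s - w))) (exp (β * (s - v)) * (β * -1)) v :=
    (((hasDerivAt_id v).const_sub s).const_mul β).exp
  simp_rw [integral_comp_sub_mul_exp]
  rw [integral_deriv_mul_exp_eq β hg hC hd hi]
  refine (hexp.mul (hasDerivAt_integral_sub_const_to_self hh s v)).congr_deriv ?_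
  ring

end ExpWeighted

theorem fOUkernel_double_integral_rep_general
    (H β : ℝ) (hH : H ∈ Set.Ioo (1/2 : ℝ) 1) (s t : ℝ) :
    fOUkernel H β s t =
      H * (2 * H - 1) *
        ∫ v in (0:ℝ)..t, ∫ u in (0:ℝ)..s,
          Real.exp (β * (t - v)) * Real.exp (β * (s - u)) * |u - v| ^ (2 * H - 2) ∧
    fOUkernel H β s t =
      (1 - (2 - 2 * H) / 2) * (1 - (2 - 2 * H)) *
        ∫ v in (0:ℝ)..t, ∫ u in (0:ℝ)..s,
          Real.exp (β * (t - v)) * Real.exp (β * (s - u)) * |u - v| ^ (-(2 - 2 * H)) := by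
  have hg : Continuous fun x : ℝ => H * |x| ^ (2 * H - 1) * Real.sign x := by
    simpa only [mul_assoc] using
      (continuous_abs_rpow_mul_sign (by linarith [hH.1] : 0 < 2 * H - 1)).const_mul H
  have hd (x : ℝ) (hx : x ∉ ({0} : Set ℝ)) : HasDerivAt
      (fun x : ℝ => H * |x| ^ (2 * H - 1) * Real.sign x) (H * (2 * H - 1) * |x| ^ (2 * H - 2)) x := by
    have h := (hasDerivAt_abs_rpow_mul_sign (2 * H - 1) hx).const_mul H
    simp only [← mul_assoc] at h
    rwa [show 2 * H - 1 - 1 = 2 * H - 2 by ring] at h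
  have hi (a b : ℝ) :
      IntervalIntegrable (fun x : ℝ => H * (2 * H - 1) * |x| ^ (2 * H - 2)) volume a b :=
    (intervalIntegrable_abs_rpow (by linarith [hH.1]) a b).const_mul _
  have key : fOUkernel H β s t = H * (2 * H - 1) *
      ∫ v in (0:ℝ)..t, ∫ u in (0:ℝ)..s,
        Real.exp (β * (t - v)) * Real.exp (β * (s - u)) * |u - v| ^ (2 * H - 2) := by
    rw [fOUkernel, ← integral_const_mul]
    refine integral_congr fun v _ => ?_
    rw [(hasDerivAt_integral_comp_sub_mul_exp β hg (countable_singleton 0) hd hi s v).deriv,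
      ← integral_const_mul, ← integral_const_mul]
    refine integral_congr fun u _ => ?_
    rw [abs_sub_comm]
    ring
  refine ⟨key, ?_⟩
  rw [show -(2 - 2 * H) = 2 * H - 2 by ring,
    show (1 - (2 - 2 * H) / 2) * (1 - (2 - 2 * H)) = H * (2 * H - 1) by ring]
  exact key

/-- For `H > 1/2` the fOU covariance kernel is a double integral against the weight
`H(2H−1)|u−v|^{2H−2} = c_α |u−v|^{−α}` with `α = 2−2H`, `c_α = (1−α/2)(1−α)`. -/
theorem fOUkernel_double_integral_rep
    (H β : ℝ) (hH : H ∈ Set.Ioo (1/2 : ℝ) 1) (s t : ℝ) (hs : 0 ≤ s) (ht : 0 ≤ t) :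
    fOUkernel H β s t =
      H * (2 * H - 1) *
        ∫ v in (0:ℝ)..t, ∫ u in (0:ℝ)..s,
          Real.exp (β * (t - v)) * Real.exp (β * (s - u)) * |u - v| ^ (2 * H - 2) ∧
    fOUkernel H β s t =
      (1 - (2 - 2 * H) / 2) * (1 - (2 - 2 * H)) *
        ∫ v in (0:ℝ)..t, ∫ u in (0:ℝ)..s,
          Real.exp (β * (t - v)) * Real.exp (β * (s - u)) * |u - v| ^ (-(2 - 2 * H)) :=
  fOUkernel_double_integral_rep_general H β hH s t
end

section
/- Let α ∈ (0,1). For every z ∈ ℂ with Im z > 0, ∫₀^∞ t^α/(t²−z²) dt = z^{α−1} · (π/(2·cos(πα/2))) · e^{(1−α)πi/2}, and for every z ∈ ℂ with Im z < 0, ∫₀^∞ t^α/(t²−z²) dt = z^{α−1} · (π/(2·cos(πα/2))) · e^{−(1−α)πi/2}, where z^{α−1} denotes the principal branch of the power function on ℂ∖(−∞,0]. -/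
/-!
Writing `z = I * w` (resp. `z = -I * w`) with `0 < re w` turns `t² - z²` into `t² + w²`, and the
factor `exp (±(1 - α) π I / 2)` cancels the argument `±π / 2` of `±I` in `z ^ (α - 1)`. So it
suffices to show `∫₀^∞ t^α / (t² + w²) dt = w^(α-1) π / (2 cos (π α / 2))` on the right half-plane.
For real `w = y > 0`, scaling `t = y s` and substituting `u = s²` reduce this to
`∫₀^∞ u^(a-1) / (1 + u) du = B(a, 1 - a) = Γ(a) Γ(1 - a) = π / sin (π a)`.
Both sides are holomorphic in `w` (differentiation under the integral sign, dominated thanks to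
`re (conj w * (t² + w²)) = re w * (t² + ‖w‖²)`), so the identity theorem extends the equality.
-/

open Real Complex Set MeasureTheory Filter Topology ComplexConjugate

lemma betaIntegral_one_sub {s : ℂ} (hs0 : 0 < s.re) (hs1 : s.re < 1) :
    betaIntegral s (1 - s) = π / Complex.sin (π * s) := by
  have h := Complex.Gamma_mul_Gamma_eq_betaIntegral (s := s) (t := 1 - s) hs0 (by simpa using hs1)
  rwa [add_sub_cancel, Complex.Gamma_one, one_mul, Complex.Gamma_mul_Gamma_one_sub, eq_comm] at h

lemma integral_Ioo_rpow_mul_one_sub_rpow {a : ℝ} (ha0 : 0 < a) (ha1 : a < 1) :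
    ∫ x in Ioo (0 : ℝ) 1, x ^ (a - 1) * (1 - x) ^ (-a) = π / Real.sin (π * a) := by
  apply Complex.ofReal_injective
  rw [← integral_complex_ofReal]
  push_cast
  rw [← betaIntegral_one_sub (by simpa) (by simpa), betaIntegral,
    intervalIntegral.integral_of_le zero_le_one, integral_Ioc_eq_integral_Ioo]
  refine setIntegral_congr_fun measurableSet_Ioo fun x ⟨hx0, hx1⟩ => ?_
  rw [Complex.ofReal_cpow hx0.le, Complex.ofReal_cpow (by linarith)]
  push_cast
  ring_nf

lemma integral_rpow_sub_one_div_one_add {a : ℝ} (ha0 : 0 < a) (ha1 : a < 1) :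
    ∫ u in Ioi (0 : ℝ), u ^ (a - 1) / (1 + u) = π / Real.sin (π * a) := by
  have hderiv : ∀ u ∈ Ioi (0 : ℝ),
      HasDerivWithinAt (fun u => u / (1 + u)) ((1 + u) ^ 2)⁻¹ (Ioi 0) u := by
    intro u (hu : 0 < u)
    refine (((hasDerivAt_id u).div ((hasDerivAt_id u).const_add 1) (by simp; linarith)).congr_deriv
      ?_).hasDerivWithinAt
    simp
  have hinj : InjOn (fun u : ℝ => u / (1 + u)) (Ioi 0) := by
    intro u (hu : 0 < u) v (hv : 0 < v) huv
    field_simp at huv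
    linarith
  have himage : (fun u : ℝ => u / (1 + u)) '' Ioi 0 = Ioo 0 1 := by
    ext x
    refine ⟨?_, fun ⟨hx0, hx1⟩ => ⟨x / (1 - x), div_pos hx0 (by linarith), ?_⟩⟩
    · rintro ⟨u, hu : 0 < u, rfl⟩
      exact ⟨by positivity, (div_lt_one (by positivity)).2 (by linarith)⟩
    · field_simp
      ring
  rw [← integral_Ioo_rpow_mul_one_sub_rpow ha0 ha1, ← himage,
    integral_image_eq_integral_abs_deriv_smul measurableSet_Ioi hderiv hinj]
  refine setIntegral_congr_fun measurableSet_Ioi fun u (hu : 0 < u) => ?_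
  have h1u : 0 < 1 + u := by linarith
  have hsub : 1 - u / (1 + u) = (1 + u)⁻¹ := by field_simp; ring
  rw [hsub, div_rpow hu.le h1u.le, inv_rpow h1u.le, rpow_neg h1u.le, inv_inv,
    rpow_sub_one hu.ne', rpow_sub_one h1u.ne', abs_of_pos (by positivity), smul_eq_mul]
  field_simp

lemma integral_rpow_div_one_add_sq {α : ℝ} (h0 : -1 < α) (h1 : α < 1) :
    ∫ s in Ioi (0 : ℝ), s ^ α / (1 + s ^ 2) = π / (2 * Real.cos (π * α / 2)) := by
  have h := integral_comp_rpow_Ioi_of_pos (g := fun u => u ^ ((α + 1) / 2 - 1) / (1 + u)) two_pos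
  rw [integral_rpow_sub_one_div_one_add (by linarith) (by linarith),
    show π * ((α + 1) / 2) = π * α / 2 + π / 2 by ring, Real.sin_add_pi_div_two] at h
  rw [mul_comm, ← div_div, ← h, ← integral_div]
  refine setIntegral_congr_fun measurableSet_Ioi fun s (hs : 0 < s) => ?_
  rw [← rpow_mul hs.le, show (2 : ℝ) * ((α + 1) / 2 - 1) = α - 1 by ring, rpow_sub_one hs.ne' α,
    rpow_two, smul_eq_mul, show (2 : ℝ) - 1 = 1 by norm_num, rpow_one]
  field_simp

lemma integral_rpow_div_sq_add_sq {α y : ℝ} (h0 : -1 < α) (h1 : α < 1) (hy : 0 < y) :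
    ∫ t in Ioi (0 : ℝ), t ^ α / (t ^ 2 + y ^ 2) =
      y ^ (α - 1) * (π / (2 * Real.cos (π * α / 2))) := by
  have h := integral_comp_mul_left_Ioi (fun t => t ^ α / (t ^ 2 + y ^ 2)) 0 hy
  rw [mul_zero, eq_inv_smul_iff₀ hy.ne'] at h
  rw [← h, ← integral_rpow_div_one_add_sq h0 h1, smul_eq_mul, ← integral_const_mul,
    ← integral_const_mul]
  refine setIntegral_congr_fun measurableSet_Ioi fun s (hs : 0 < s) => ?_
  rw [mul_rpow hy.le hs.le, rpow_sub_one hy.ne']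
  field_simp
  ring

lemma integrableOn_rpow_div_sq_add_sq {α y : ℝ} (h0 : -1 < α) (h1 : α < 1) (hy : 0 < y) :
    IntegrableOn (fun t => t ^ α / (t ^ 2 + y ^ 2)) (Ioi 0) := by
  refine Integrable.of_integral_ne_zero ?_
  have hcos : 0 < Real.cos (π * α / 2) :=
    Real.cos_pos_of_mem_Ioo ⟨by nlinarith [pi_pos], by nlinarith [pi_pos]⟩
  rw [integral_rpow_div_sq_add_sq h0 h1 hy]
  positivity

lemma re_mul_sq_add_norm_sq_le_norm_mul_norm (t : ℝ) (w : ℂ) :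
    w.re * (t ^ 2 + ‖w‖ ^ 2) ≤ ‖w‖ * ‖(t : ℂ) ^ 2 + w ^ 2‖ :=
  calc w.re * (t ^ 2 + ‖w‖ ^ 2) = (conj w * ((t : ℂ) ^ 2 + w ^ 2)).re := by
        rw [Complex.sq_norm, Complex.normSq_apply]
        simp [pow_two]
        ring
    _ ≤ ‖w‖ * ‖(t : ℂ) ^ 2 + w ^ 2‖ := by
        rw [← Complex.norm_conj w, ← norm_mul]
        exact re_le_norm _

lemma sq_add_sq_ne_zero_of_re_pos (t : ℝ) {w : ℂ} (hw : 0 < w.re) : (t : ℂ) ^ 2 + w ^ 2 ≠ 0 := by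
  intro h
  have hle := re_mul_sq_add_norm_sq_le_norm_mul_norm t w
  rw [h, norm_zero, mul_zero] at hle
  have hpos : 0 < ‖w‖ := hw.trans_le (re_le_norm w)
  exact hle.not_gt (by positivity)

lemma norm_inv_sq_add_sq_le {δ M t : ℝ} {w : ℂ} (hδ : 0 < δ) (hδw : δ ≤ w.re) (hwM : ‖w‖ ≤ M) :
    ‖((t : ℂ) ^ 2 + w ^ 2)⁻¹‖ ≤ M / δ * (t ^ 2 + δ ^ 2)⁻¹ := by
  have hw : δ ≤ ‖w‖ := hδw.trans (re_le_norm w)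
  have hM : 0 < M := by linarith
  have hbound : δ * (t ^ 2 + δ ^ 2) ≤ M * ‖(t : ℂ) ^ 2 + w ^ 2‖ :=
    calc δ * (t ^ 2 + δ ^ 2) ≤ w.re * (t ^ 2 + ‖w‖ ^ 2) := by gcongr; linarith
      _ ≤ ‖w‖ * ‖(t : ℂ) ^ 2 + w ^ 2‖ := re_mul_sq_add_norm_sq_le_norm_mul_norm t w
      _ ≤ M * ‖(t : ℂ) ^ 2 + w ^ 2‖ := by gcongr
  rw [norm_inv, show M / δ * (t ^ 2 + δ ^ 2)⁻¹ = (δ * (t ^ 2 + δ ^ 2) / M)⁻¹ by field_simp]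
  exact inv_anti₀ (by positivity) ((div_le_iff₀' hM).2 hbound)

lemma norm_cpow_div_sq_add_sq_le {α δ M t : ℝ} {w : ℂ} (hδ : 0 < δ) (hδw : δ ≤ w.re)
    (hwM : ‖w‖ ≤ M) (ht : 0 < t) :
    ‖(t : ℂ) ^ (α : ℂ) / ((t : ℂ) ^ 2 + w ^ 2)‖ ≤ M / δ * (t ^ α / (t ^ 2 + δ ^ 2)) :=
  calc ‖(t : ℂ) ^ (α : ℂ) / ((t : ℂ) ^ 2 + w ^ 2)‖ = t ^ α * ‖((t : ℂ) ^ 2 + w ^ 2)⁻¹‖ := by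
        rw [div_eq_mul_inv, norm_mul, norm_cpow_eq_rpow_re_of_pos ht, ofReal_re]
    _ ≤ t ^ α * (M / δ * (t ^ 2 + δ ^ 2)⁻¹) := by gcongr; exact norm_inv_sq_add_sq_le hδ hδw hwM
    _ = M / δ * (t ^ α / (t ^ 2 + δ ^ 2)) := by ring

lemma norm_cpow_mul_neg_two_mul_div_sq_le {α δ M t : ℝ} {w : ℂ} (hδ : 0 < δ) (hδw : δ ≤ w.re)
    (hwM : ‖w‖ ≤ M) (ht : 0 < t) :
    ‖(t : ℂ) ^ (α : ℂ) * (-(2 * w) / ((t : ℂ) ^ 2 + w ^ 2) ^ 2)‖ ≤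
      2 * M ^ 3 / δ ^ 4 * (t ^ α / (t ^ 2 + δ ^ 2)) := by
  have hM : 0 ≤ M := (norm_nonneg w).trans hwM
  have hδt : (t ^ 2 + δ ^ 2)⁻¹ ≤ (δ ^ 2)⁻¹ := inv_anti₀ (by positivity) (by nlinarith)
  calc ‖(t : ℂ) ^ (α : ℂ) * (-(2 * w) / ((t : ℂ) ^ 2 + w ^ 2) ^ 2)‖
      = t ^ α * (2 * ‖w‖ * ‖((t : ℂ) ^ 2 + w ^ 2)⁻¹‖ ^ 2) := by
        simp [norm_cpow_eq_rpow_re_of_pos ht, div_eq_mul_inv]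
    _ ≤ t ^ α * (2 * M * (M / δ * (t ^ 2 + δ ^ 2)⁻¹) ^ 2) := by
        gcongr
        exact norm_inv_sq_add_sq_le hδ hδw hwM
    _ = t ^ α * (2 * M * (M / δ) ^ 2 * (t ^ 2 + δ ^ 2)⁻¹ * (t ^ 2 + δ ^ 2)⁻¹) := by ring
    _ ≤ t ^ α * (2 * M * (M / δ) ^ 2 * (t ^ 2 + δ ^ 2)⁻¹ * (δ ^ 2)⁻¹) := by gcongr
    _ = 2 * M ^ 3 / δ ^ 4 * (t ^ α / (t ^ 2 + δ ^ 2)) := by field_simp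

lemma hasDerivAt_integral_cpow_div_sq_add_sq {α : ℝ} (h0 : -1 < α) (h1 : α < 1) {w₀ : ℂ}
    (hw₀ : 0 < w₀.re) :
    HasDerivAt (fun w : ℂ => ∫ t in Ioi (0 : ℝ), (t : ℂ) ^ (α : ℂ) / ((t : ℂ) ^ 2 + w ^ 2))
      (∫ t in Ioi (0 : ℝ), (t : ℂ) ^ (α : ℂ) * (-(2 * w₀) / ((t : ℂ) ^ 2 + w₀ ^ 2) ^ 2)) w₀ := by
  set δ := w₀.re / 2 with hδ_def
  set M := ‖w₀‖ + 1 with hM_def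
  have hδ : 0 < δ := by positivity
  set s : Set ℂ := {w | δ < w.re ∧ ‖w‖ < M}
  have hw₀s : w₀ ∈ s := show δ < w₀.re ∧ ‖w₀‖ < M by constructor <;> linarith
  have hs : s ∈ 𝓝 w₀ := ((isOpen_lt continuous_const continuous_re).inter
    (isOpen_lt continuous_norm continuous_const)).mem_nhds hw₀s
  have hg : Integrable (fun t : ℝ => t ^ α / (t ^ 2 + δ ^ 2)) (volume.restrict (Ioi 0)) :=
    integrableOn_rpow_div_sq_add_sq h0 h1 hδ
  have hmeas : ∀ w : ℂ, AEStronglyMeasurable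
      (fun t : ℝ => (t : ℂ) ^ (α : ℂ) / ((t : ℂ) ^ 2 + w ^ 2)) (volume.restrict (Ioi 0)) :=
    fun w => (by fun_prop : Measurable _).aestronglyMeasurable
  have hmeas' : AEStronglyMeasurable
      (fun t : ℝ => (t : ℂ) ^ (α : ℂ) * (-(2 * w₀) / ((t : ℂ) ^ 2 + w₀ ^ 2) ^ 2))
      (volume.restrict (Ioi 0)) := (by fun_prop : Measurable _).aestronglyMeasurable
  refine (hasDerivAt_integral_of_dominated_loc_of_deriv_le
    (F' := fun w t => (t : ℂ) ^ (α : ℂ) * (-(2 * w) / ((t : ℂ) ^ 2 + w ^ 2) ^ 2)) hs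
    (Eventually.of_forall hmeas) ((hg.const_mul (M / δ)).mono' (hmeas w₀) ?_) hmeas' ?_
    (hg.const_mul (2 * M ^ 3 / δ ^ 4)) ?_).2
  · filter_upwards [ae_restrict_mem measurableSet_Ioi] with t ht
      using norm_cpow_div_sq_add_sq_le hδ hw₀s.1.le hw₀s.2.le ht
  · filter_upwards [ae_restrict_mem measurableSet_Ioi] with t ht w hw
      using norm_cpow_mul_neg_two_mul_div_sq_le hδ hw.1.le hw.2.le ht
  · filter_upwards with t w hw
    have hq := sq_add_sq_ne_zero_of_re_pos t (hδ.trans hw.1)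
    exact ((((hasDerivAt_pow 2 w).const_add _).inv hq).const_mul _).congr_deriv (by simp)

lemma integral_ofReal_cpow_div_sq_add_sq {α y : ℝ} (h0 : -1 < α) (h1 : α < 1) (hy : 0 < y) :
    ∫ t in Ioi (0 : ℝ), (t : ℂ) ^ (α : ℂ) / ((t : ℂ) ^ 2 + (y : ℂ) ^ 2) =
      (y : ℂ) ^ ((α : ℂ) - 1) * (π / (2 * Real.cos (π * α / 2)) : ℝ) := by
  rw [← ofReal_one, ← ofReal_sub, ← ofReal_cpow hy.le, ← ofReal_mul,
    ← integral_rpow_div_sq_add_sq h0 h1 hy, ← integral_complex_ofReal]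
  refine setIntegral_congr_fun measurableSet_Ioi fun t (ht : 0 < t) => ?_
  push_cast [ofReal_cpow ht.le]
  rfl

lemma integral_cpow_div_sq_add_sq {α : ℝ} (h0 : -1 < α) (h1 : α < 1) {w : ℂ} (hw : 0 < w.re) :
    ∫ t in Ioi (0 : ℝ), (t : ℂ) ^ (α : ℂ) / ((t : ℂ) ^ 2 + w ^ 2) =
      w ^ ((α : ℂ) - 1) * (π / (2 * Real.cos (π * α / 2)) : ℝ) := by
  have hU : IsOpen {w : ℂ | 0 < w.re} := isOpen_lt continuous_const continuous_re
  have hF : AnalyticOnNhd ℂ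
      (fun w : ℂ => ∫ t in Ioi (0 : ℝ), (t : ℂ) ^ (α : ℂ) / ((t : ℂ) ^ 2 + w ^ 2))
      {w : ℂ | 0 < w.re} :=
    DifferentiableOn.analyticOnNhd (fun w hw =>
      (hasDerivAt_integral_cpow_div_sq_add_sq h0 h1 hw).differentiableAt.differentiableWithinAt) hU
  have hG : AnalyticOnNhd ℂ (fun w : ℂ => w ^ ((α : ℂ) - 1) * (π / (2 * Real.cos (π * α / 2)) : ℝ))
      {w : ℂ | 0 < w.re} :=
    DifferentiableOn.analyticOnNhd (fun w (hw : 0 < w.re) =>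
      ((differentiableAt_id.cpow_const (mem_slitPlane_iff.2 (Or.inl hw))).mul_const
        _).differentiableWithinAt) hU
  have hpos : ∀ᶠ y in 𝓝[≠] (1 : ℝ), 0 < y :=
    eventually_nhdsWithin_of_eventually_nhds (lt_mem_nhds one_pos)
  have hofReal : Tendsto ((↑) : ℝ → ℂ) (𝓝[≠] 1) (𝓝[≠] 1) :=
    tendsto_nhdsWithin_of_tendsto_nhds_of_eventually_within _
      (continuous_ofReal.continuousWithinAt.tendsto.trans (by simp))
      (eventually_nhdsWithin_of_forall fun y hy => by simpa using hy)
  refine hF.eqOn_of_preconnected_of_frequently_eq hG (convex_halfSpace_re_gt 0).isPreconnected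
    (by simp : (1 : ℂ) ∈ {w : ℂ | 0 < w.re}) (hofReal.frequently ?_) hw
  exact (hpos.mono fun y hy => integral_ofReal_cpow_div_sq_add_sq h0 h1 hy).frequently

lemma mul_cpow_of_abs_arg_le {u w : ℂ} (hu : u ≠ 0) (harg : |u.arg| ≤ π / 2) (hw : 0 < w.re)
    (s : ℂ) : (u * w) ^ s = u ^ s * w ^ s := by
  have hw0 : w ≠ 0 := fun h => by simp [h] at hw
  obtain ⟨hu1, hu2⟩ := abs_le.1 harg
  obtain ⟨hw1, hw2⟩ := abs_lt.1 (abs_arg_lt_pi_div_two_iff.2 (Or.inl hw))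
  rw [cpow_def_of_ne_zero (mul_ne_zero hu hw0), log_mul hu hw0 ⟨by linarith, by linarith⟩,
    add_mul, Complex.exp_add, ← cpow_def_of_ne_zero hu, ← cpow_def_of_ne_zero hw0]

/-- Evaluation of `∫₀^∞ t^α/(t²−z²) dt` for `z` in the upper and lower half-planes
(`z^{α−1}` is the principal branch). -/
theorem integral_tpow_div_sq_sub_sq
    (α : ℝ) (hα : α ∈ Set.Ioo (0:ℝ) 1) (z : ℂ) :
    (0 < z.im →
      (∫ t in Set.Ioi (0:ℝ), ((t : ℂ) ^ (α : ℂ)) / ((t : ℂ) ^ 2 - z ^ 2))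
        = z ^ ((α : ℂ) - 1) * ((π : ℂ) / (2 * Complex.cos (π * α / 2))) *
            Complex.exp ((1 - (α : ℂ)) * π * Complex.I / 2)) ∧
    (z.im < 0 →
      (∫ t in Set.Ioi (0:ℝ), ((t : ℂ) ^ (α : ℂ)) / ((t : ℂ) ^ 2 - z ^ 2))
        = z ^ ((α : ℂ) - 1) * ((π : ℂ) / (2 * Complex.cos (π * α / 2))) *
            Complex.exp (-((1 - (α : ℂ)) * π * Complex.I / 2))) := by
  obtain ⟨h0, h1⟩ := hα
  have hC : ((π / (2 * Real.cos (π * α / 2)) : ℝ) : ℂ) = π / (2 * Complex.cos (π * α / 2)) := by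
    push_cast; rfl
  refine ⟨fun hz => ?_, fun hz => ?_⟩
  · obtain ⟨w, hw, rfl⟩ : ∃ w : ℂ, 0 < w.re ∧ I * w = z :=
      ⟨-I * z, by simpa using hz, by ring_nf; simp⟩
    have hexp : exp (π / 2 * I * (α - 1)) * exp ((1 - α) * π * I / 2) = 1 := by
      rw [← Complex.exp_add]; ring_nf; exact exp_zero
    simp only [mul_pow, I_sq, neg_one_mul, sub_neg_eq_add]
    rw [integral_cpow_div_sq_add_sq (by linarith) h1 hw,
      mul_cpow_of_abs_arg_le I_ne_zero (by simp [abs_of_pos pi_div_two_pos]) hw,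
      cpow_def_of_ne_zero I_ne_zero, log_I, hC]
    linear_combination -(w ^ ((α : ℂ) - 1) * (π / (2 * Complex.cos (π * α / 2)))) * hexp
  · obtain ⟨w, hw, rfl⟩ : ∃ w : ℂ, 0 < w.re ∧ -I * w = z :=
      ⟨I * z, by simpa using hz, by ring_nf; simp⟩
    have hexp : exp (-(π / 2) * I * (α - 1)) * exp (-((1 - α) * π * I / 2)) = 1 := by
      rw [← Complex.exp_add]; ring_nf; exact exp_zero
    simp only [mul_pow, neg_pow_two, I_sq, neg_one_mul, sub_neg_eq_add]
    rw [integral_cpow_div_sq_add_sq (by linarith) h1 hw,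
      mul_cpow_of_abs_arg_le (neg_ne_zero.2 I_ne_zero) (by simp [abs_of_pos pi_div_two_pos]) hw,
      cpow_def_of_ne_zero (neg_ne_zero.2 I_ne_zero), log_neg_I, hC]
    linear_combination -(w ^ ((α : ℂ) - 1) * (π / (2 * Complex.cos (π * α / 2)))) * hexp
end

section
/- Let H ∈ (0,1), a, b, C₁, C₂, M > 0, and let (ℓ_n)_{n≥1} be a sequence of positive reals with |ℓ_{n+1} − ℓ_n| ≤ C₁·n^{2H} and ℓ_n ≥ C₂·n^{2H+1} for all n ≥ 1. Let (S_n)_{n≥0} be a real sequence with S₀ = 0 and |S_n| ≤ M for all n. Then there exists C > 0 such that for all ε ∈ (0,1], the series Σ_{n≥1} ( ε·a / (ε·ℓ_n + b) )·(S_n − S_{n−1}) converges absolutely and | Σ_{n=1}^∞ ( ε·a / (ε·ℓ_n + b) )·(S_n − S_{n−1}) | ≤ C·ε. -/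
/-!
Summation by parts turns `∑ gₙ (Sₙ₊₁ - Sₙ)`, `gₙ = εa/(εℓₙ₊₁ + b)`, into `∑ (gₙ - gₙ₊₁) Sₙ₊₁`;
the boundary term vanishes because `S₀ = 0` and `gₙ → 0`. By Bernoulli's inequality the gaps of
the lower envelope `λₙ = C₂ n^{2H+1}` are at least `C₂ n^{2H}`, so they dominate the gaps of `ℓ`
up to the factor `C₁/C₂`; hence `|gₙ - gₙ₊₁| ≤ εa(C₁/C₂)(τₙ - τₙ₊₁)` with `τₙ = 1/(ελₙ₊₁ + b)`.
The differences of `τ` telescope to at most `τ₀ ≤ 1/b`, giving the bound `MaC₁ε/(C₂b)`.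
-/

open Real Filter Topology Finset

theorem sum_range_mul_sub_eq_sum_sub_mul {R : Type*} [Ring R] (g S : ℕ → R) (N : ℕ) :
    ∑ i ∈ range N, g i * (S (i + 1) - S i) =
      ∑ i ∈ range N, (g i - g (i + 1)) * S (i + 1) + (g N * S N - g 0 * S 0) := by
  rw [← sum_range_sub (fun i => g i * S i), ← sum_add_distrib]
  refine sum_congr rfl fun i _ => ?_
  noncomm_ring

theorem tsum_mul_sub_eq_tsum_sub_mul {R : Type*} [Ring R] [TopologicalSpace R] [ContinuousAdd R]
    [T2Space R] {g S : ℕ → R} (hS0 : S 0 = 0) (hgS : Tendsto (fun n => g n * S n) atTop (𝓝 0))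
    (ht : Summable fun n => g n * (S (n + 1) - S n))
    (hu : Summable fun n => (g n - g (n + 1)) * S (n + 1)) :
    ∑' n, g n * (S (n + 1) - S n) = ∑' n, (g n - g (n + 1)) * S (n + 1) := by
  refine tendsto_nhds_unique ht.hasSum.tendsto_sum_nat ?_
  simpa [sum_range_mul_sub_eq_sum_sub_mul, hS0] using hu.hasSum.tendsto_sum_nat.add hgS

theorem abs_inv_sub_inv_le {x y u v K : ℝ} (hu : 0 < u) (hv : 0 < v) (hux : u ≤ x) (hvy : v ≤ y)
    (hxy : |x - y| ≤ K * (v - u)) : |x⁻¹ - y⁻¹| ≤ K * (u⁻¹ - v⁻¹) := by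
  have hx : 0 < x := hu.trans_le hux
  have hy : 0 < y := hv.trans_le hvy
  rw [inv_sub_inv hx.ne' hy.ne', inv_sub_inv hu.ne' hv.ne', abs_div, abs_of_pos (mul_pos hx hy),
    abs_sub_comm, mul_div_assoc']
  exact div_le_div₀ ((abs_nonneg _).trans hxy) hxy (mul_pos hu hv) (mul_le_mul hux hvy hv.le hx.le)

theorem rpow_sub_one_le_add_one_rpow_sub_rpow {p x : ℝ} (hp : 1 ≤ p) (hx : 0 < x) :
    x ^ (p - 1) ≤ (x + 1) ^ p - x ^ p := by
  have hbern : 1 + p * x⁻¹ ≤ (1 + x⁻¹) ^ p :=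
    one_add_mul_self_le_rpow_one_add (by linarith [inv_pos.2 hx]) hp
  have hscale : (x + 1) ^ p = (1 + x⁻¹) ^ p * x ^ p := by
    rw [← mul_rpow (by positivity) hx.le, add_mul, inv_mul_cancel₀ hx.ne', one_mul]
  have hxp : x ^ p = x ^ (p - 1) * x := by
    rw [← rpow_add_one hx.ne', sub_add_cancel]
  have hpos : 0 ≤ x ^ (p - 1) := by positivity
  calc x ^ (p - 1) ≤ p * x⁻¹ * x ^ p := by
        rw [hxp, mul_comm (x ^ (p - 1)), ← mul_assoc, mul_assoc p, inv_mul_cancel₀ hx.ne', mul_one]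
        exact le_mul_of_one_le_left hpos hp
    _ ≤ ((1 + x⁻¹) ^ p - 1) * x ^ p := by gcongr; linarith
    _ = (x + 1) ^ p - x ^ p := by rw [hscale]; ring

theorem abs_tsum_mul_sub_le {g S τ : ℕ → ℝ} {M K : ℝ} (hK : 0 ≤ K) (hS0 : S 0 = 0)
    (hS : ∀ n, |S n| ≤ M) (hg : Summable g) (hτ : Antitone τ) (hτ0 : ∀ n, 0 ≤ τ n)
    (hgτ : ∀ n, |g n - g (n + 1)| ≤ K * (τ n - τ (n + 1))) :
    Summable (fun n => |g n * (S (n + 1) - S n)|) ∧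
      |∑' n, g n * (S (n + 1) - S n)| ≤ M * K * τ 0 := by
  have hM : 0 ≤ M := (abs_nonneg _).trans (hS 0)
  have hτ_partial : ∀ N, ∑ i ∈ range N, (τ i - τ (i + 1)) ≤ τ 0 := fun N => by
    rw [sum_range_sub']
    linarith [hτ0 N]
  have hτ_sub : ∀ n, 0 ≤ τ n - τ (n + 1) := fun n => sub_nonneg.2 (hτ n.le_succ)
  have hu_le : ∀ n, |(g n - g (n + 1)) * S (n + 1)| ≤ M * K * (τ n - τ (n + 1)) := fun n => by
    rw [abs_mul, mul_comm M, mul_right_comm]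
    exact mul_le_mul (hgτ n) (hS _) (abs_nonneg _) (mul_nonneg hK (hτ_sub n))
  have hτ_sum : Summable fun n => M * K * (τ n - τ (n + 1)) :=
    (summable_of_sum_range_le hτ_sub hτ_partial).mul_left _
  have hu : Summable fun n => |(g n - g (n + 1)) * S (n + 1)| :=
    .of_nonneg_of_le (fun _ => abs_nonneg _) hu_le hτ_sum
  have ht : Summable fun n => |g n * (S (n + 1) - S n)| := by
    refine .of_nonneg_of_le (fun _ => abs_nonneg _) (fun n => ?_) (hg.abs.mul_right (M + M))
    rw [abs_mul]
    exact mul_le_mul_of_nonneg_left ((abs_sub _ _).trans (add_le_add (hS _) (hS _))) (abs_nonneg _)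
  have hgS : Tendsto (fun n => g n * S n) atTop (𝓝 0) :=
    hg.tendsto_atTop_zero.zero_mul_isBoundedUnder_le ⟨M, eventually_map.2 (.of_forall hS)⟩
  refine ⟨ht, ?_⟩
  rw [tsum_mul_sub_eq_tsum_sub_mul hS0 hgS ht.of_abs hu.of_abs]
  calc |∑' n, (g n - g (n + 1)) * S (n + 1)|
      ≤ ∑' n, |(g n - g (n + 1)) * S (n + 1)| := by
        rw [← Real.norm_eq_abs]
        exact norm_tsum_le_tsum_norm hu
    _ ≤ ∑' n, M * K * (τ n - τ (n + 1)) := hu.tsum_le_tsum hu_le hτ_sum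
    _ = M * K * ∑' n, (τ n - τ (n + 1)) := tsum_mul_left
    _ ≤ M * K * τ 0 :=
      mul_le_mul_of_nonneg_left (Real.tsum_le_of_sum_range_le hτ_sub hτ_partial) (by positivity)

section
variable {ℓ : ℕ → ℝ} {a b C₁ C₂ p ε : ℝ}

theorem summable_mul_div_mul_add (ha : 0 ≤ a) (hb : 0 ≤ b) (hε : 0 < ε) (hC₂ : 0 < C₂)
    (hp : 1 < p) (hlow : ∀ n : ℕ, 1 ≤ n → C₂ * (n : ℝ) ^ p ≤ ℓ n) :
    Summable fun n : ℕ => ε * a / (ε * ℓ (n + 1) + b) := by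
  refine .of_nonneg_of_le (fun n => ?_) (fun n => ?_)
    (((Real.summable_one_div_nat_add_rpow 1 p).2 hp).mul_left (a / C₂))
  · have : 0 ≤ ℓ (n + 1) := le_trans (by positivity) (hlow (n + 1) n.succ_pos)
    positivity
  · have hlow' : ε * (C₂ * ((n + 1 : ℕ) : ℝ) ^ p) ≤ ε * ℓ (n + 1) + b := by
      nlinarith [hlow (n + 1) n.succ_pos]
    calc ε * a / (ε * ℓ (n + 1) + b) ≤ ε * a / (ε * (C₂ * ((n + 1 : ℕ) : ℝ) ^ p)) :=
          div_le_div_of_nonneg_left (by positivity) (by positivity) hlow'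
      _ = a / C₂ * (1 / |(n : ℝ) + 1| ^ p) := by
          rw [abs_of_pos (by positivity)]
          push_cast
          field_simp

theorem abs_mul_div_mul_add_sub_le (ha : 0 ≤ a) (hb : 0 < b) (hε : 0 < ε) (hC₁ : 0 ≤ C₁)
    (hC₂ : 0 < C₂) (hp : 1 ≤ p) (hlow : ∀ n : ℕ, 1 ≤ n → C₂ * (n : ℝ) ^ p ≤ ℓ n)
    (hdiff : ∀ n : ℕ, 1 ≤ n → |ℓ (n + 1) - ℓ n| ≤ C₁ * (n : ℝ) ^ (p - 1)) (n : ℕ) :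
    |ε * a / (ε * ℓ (n + 1) + b) - ε * a / (ε * ℓ (n + 1 + 1) + b)| ≤
      ε * a * (C₁ / C₂) * ((ε * C₂ * ((n + 1 : ℕ) : ℝ) ^ p + b)⁻¹ -
        (ε * C₂ * ((n + 1 + 1 : ℕ) : ℝ) ^ p + b)⁻¹) := by
  have hlow' : ∀ m : ℕ, 1 ≤ m → ε * C₂ * (m : ℝ) ^ p + b ≤ ε * ℓ m + b := fun m hm => by
    nlinarith [hlow m hm]
  rw [div_eq_mul_inv, div_eq_mul_inv, ← mul_sub, abs_mul, abs_of_nonneg (by positivity),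
    mul_assoc (ε * a) (C₁ / C₂)]
  refine mul_le_mul_of_nonneg_left ?_ (by positivity)
  refine abs_inv_sub_inv_le (by positivity) (by positivity) (hlow' _ n.succ_pos)
    (hlow' _ (n + 1).succ_pos) ?_
  have hgap := rpow_sub_one_le_add_one_rpow_sub_rpow hp ((Nat.cast_pos (α := ℝ)).2 n.succ_pos)
  push_cast at hgap ⊢
  rw [abs_sub_comm, add_sub_add_right_eq_sub, ← mul_sub, abs_mul, abs_of_pos hε]
  have hstep := hdiff (n + 1) n.succ_pos
  push_cast at hstep
  calc ε * |ℓ (n + 1 + 1) - ℓ (n + 1)| ≤ ε * (C₁ * ((n : ℝ) + 1) ^ (p - 1)) := by gcongr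
    _ ≤ ε * (C₁ * (((n : ℝ) + 1 + 1) ^ p - ((n : ℝ) + 1) ^ p)) := by gcongr
    _ = _ := by field_simp; ring
end

theorem abel_summation_estimate_general
    (H a b C₁ C₂ M : ℝ) (hH : H ∈ Set.Ioo (0:ℝ) 1)
    (ha : 0 < a) (hb : 0 < b) (hC₁ : 0 < C₁) (hC₂ : 0 < C₂) (hM : 0 < M)
    (ℓ : ℕ → ℝ)
    (hdiff : ∀ n : ℕ, 1 ≤ n → |ℓ (n + 1) - ℓ n| ≤ C₁ * (n : ℝ) ^ (2 * H))
    (hlow : ∀ n : ℕ, 1 ≤ n → C₂ * (n : ℝ) ^ (2 * H + 1) ≤ ℓ n)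
    (S : ℕ → ℝ) (hS0 : S 0 = 0) (hSb : ∀ n : ℕ, |S n| ≤ M) :
    ∃ C : ℝ, 0 < C ∧ ∀ ε : ℝ, ε ∈ Set.Ioc (0:ℝ) 1 →
      Summable (fun n : ℕ => |ε * a / (ε * ℓ (n + 1) + b) * (S (n + 1) - S n)|) ∧
      |∑' n : ℕ, ε * a / (ε * ℓ (n + 1) + b) * (S (n + 1) - S n)| ≤ C * ε := by
  have hp : 1 < 2 * H + 1 := by linarith [hH.1]
  have hdiff' : ∀ n : ℕ, 1 ≤ n → |ℓ (n + 1) - ℓ n| ≤ C₁ * (n : ℝ) ^ (2 * H + 1 - 1) := by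
    simpa only [add_sub_cancel_right] using hdiff
  refine ⟨M * a * C₁ / (C₂ * b), by positivity, fun ε ⟨hε, _⟩ => ?_⟩
  obtain ⟨hsum, hbound⟩ := abs_tsum_mul_sub_le (by positivity) hS0 hSb
    (summable_mul_div_mul_add ha.le hb.le hε hC₂ hp hlow)
    (fun m n hmn => inv_anti₀ (by positivity) (by gcongr)) (fun n => by positivity)
    (abs_mul_div_mul_add_sub_le ha.le hb hε hC₁.le hC₂ hp.le hlow hdiff')
  refine ⟨hsum, hbound.trans ?_⟩
  calc _ ≤ M * (ε * a * (C₁ / C₂)) * b⁻¹ := by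
        gcongr
        exact le_add_of_nonneg_left (by positivity)
    _ = M * a * C₁ / (C₂ * b) * ε := by field_simp

/-- Abel-summation estimate: if `ℓ_n ≥ C₂ n^{2H+1}`, `|ℓ_{n+1} − ℓ_n| ≤ C₁ n^{2H}` and
`(S_n)` is bounded with `S₀ = 0`, then `Σ_{n≥1} (εa/(εℓ_n + b))(S_n − S_{n−1}) = O(ε)`
uniformly over `ε ∈ (0,1]`. -/
theorem abel_summation_estimate
    (H a b C₁ C₂ M : ℝ) (hH : H ∈ Set.Ioo (0:ℝ) 1)
    (ha : 0 < a) (hb : 0 < b) (hC₁ : 0 < C₁) (hC₂ : 0 < C₂) (hM : 0 < M)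
    (ℓ : ℕ → ℝ) (hℓpos : ∀ n : ℕ, 1 ≤ n → 0 < ℓ n)
    (hdiff : ∀ n : ℕ, 1 ≤ n → |ℓ (n + 1) - ℓ n| ≤ C₁ * (n : ℝ) ^ (2 * H))
    (hlow : ∀ n : ℕ, 1 ≤ n → C₂ * (n : ℝ) ^ (2 * H + 1) ≤ ℓ n)
    (S : ℕ → ℝ) (hS0 : S 0 = 0) (hSb : ∀ n : ℕ, |S n| ≤ M) :
    ∃ C : ℝ, 0 < C ∧ ∀ ε : ℝ, ε ∈ Set.Ioc (0:ℝ) 1 →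
      Summable (fun n : ℕ => |ε * a / (ε * ℓ (n + 1) + b) * (S (n + 1) - S n)|) ∧
      |∑' n : ℕ, ε * a / (ε * ℓ (n + 1) + b) * (S (n + 1) - S n)| ≤ C * ε :=
  abel_summation_estimate_general H a b C₁ C₂ M hH ha hb hC₁ hC₂ hM ℓ hdiff hlow S hS0 hSb
end
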